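/- Under the i.i.d. sampling model where N_bb, N_sb ~ Binomial(n, 1-r) independently, for any τ ∈ (0, 1/2) and r ∈ (0, 1/2): (1-r)^n r^n ≤ P(α_b ≤ τ ∧ α_s ≤ τ) ≤ exp(-2(1-2τ)²(1-r)²n / (τ² + (1-τ)²)), where α_b = N_sb/(N_sb + N_bb) and α_s = (n - N_bb)/(2n - N_bb - N_sb). -/

import Mathlib

/-!
The event `N_bb = n, N_sb = 0` makes both noises vanish and has probability `(1 - r) ^ n * r ^ n`.

For the upper bound, `α_b ≤ τ` already forces `τ N_bb - (1 - τ) N_sb ≥ 0`. Writing `p = 1 - r`,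
the mgf of `Bin(n, p)` is `(1 - p + p e^t) ^ n`, and Hoeffding's lemma for a single Bernoulli
variable bounds each factor by `exp (p t + t² / 8)`, so a centred binomial is sub-Gaussian with
variance proxy `n / 4`. By independence, `τ (N_bb - n p) - (1 - τ) (N_sb - n p)` is sub-Gaussian
with proxy `n (τ² + (1 - τ)²) / 4`, and the Chernoff bound at the deviation `n p (1 - 2 τ)` is
exactly the claimed exponential.
-/

open MeasureTheory ProbabilityTheory unitInterval Real
open scoped NNReal

lemma one_sub_add_mul_exp_le_exp (p : I) (t : ℝ) :
    1 - p + p * exp t ≤ exp (p * t + t ^ 2 / 8) := by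
  have hbound : ∀ᵐ x ∂bernoulliMeasure (1 : ℝ) 0 p, x ∈ Set.Icc (0 : ℝ) 1 := by
    classical
    rw [ae_iff, ← Set.compl_def, bernoulliMeasure_apply_of_notMem_of_notMem] <;> simp
  have hmean : ∫ x, x ∂bernoulliMeasure (1 : ℝ) 0 p = p := by
    simp [integral_bernoulliMeasure]
  have hmgf : mgf (fun x ↦ x) (bernoulliMeasure (1 : ℝ) 0 p) t = 1 - p + p * exp t := by
    rw [mgf, integral_bernoulliMeasure]; simp; ring
  have hoeffding := (hasSubgaussianMGF_of_mem_Icc aemeasurable_id hbound).mgf_le t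
  simp only [id, hmean, sub_eq_add_neg (b := (p : ℝ)), mgf_add_const, hmgf] at hoeffding
  rw [← le_div_iff₀ (exp_pos _), ← exp_sub] at hoeffding
  calc 1 - (p : ℝ) + p * exp t = 1 + -p + p * exp t := by ring
    _ ≤ _ := hoeffding
    _ = exp (p * t + t ^ 2 / 8) := by norm_num; ring

lemma one_sub_mul_le_mul_of_div_add_le {s b τ : ℝ} (hs : 0 ≤ s) (hb : 0 ≤ b)
    (h : s / (s + b) ≤ τ) : (1 - τ) * s ≤ τ * b := by
  rcases (add_nonneg hs hb).eq_or_lt with h0 | hpos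
  · obtain rfl : s = 0 := by linarith
    obtain rfl : b = 0 := by linarith
    simp
  · rw [div_le_iff₀ hpos] at h
    linarith

section Binomial

variable {Ω : Type*} [MeasurableSpace Ω] {μ : Measure Ω} {X Y : Ω → ℕ} {n : ℕ} {p : I}

lemma hasLaw_binomial_of_measure_eq (hX : Measurable X)
    (h : ∀ k, μ {ω | X ω = k} = ENNReal.ofReal (n.choose k * p ^ k * (1 - p) ^ (n - k))) :
    HasLaw X (binomial n p) μ where
  aemeasurable := hX.aemeasurable
  map_eq := Measure.ext_of_singleton fun k ↦ by
    rw [Measure.map_apply hX (measurableSet_singleton k), binomial_singleton]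
    exact h k

lemma mgf_of_hasLaw_binomial (hX : HasLaw X (binomial n p) μ) (t : ℝ) :
    mgf (fun ω ↦ (X ω : ℝ)) μ t = (1 - p + p * exp t) ^ n := by
  rw [mgf, ← Function.comp_def (fun k : ℕ ↦ exp (t * k)) X,
    hX.integral_comp .of_discrete, integral_binomial, add_comm, add_pow,
    ← Nat.range_succ_eq_Iic]
  refine Finset.sum_congr rfl fun k _ ↦ ?_
  rw [smul_eq_mul, mul_pow, ← exp_nat_mul]
  ring_nf

lemma hasSubgaussianMGF_of_hasLaw_binomial (hX : HasLaw X (binomial n p) μ) :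
    HasSubgaussianMGF (fun ω ↦ X ω - n * p) (n / 4) μ where
  integrable_exp_mul t :=
    (hX.map_eq ▸ integrable_binomial (fun k : ℕ ↦ exp (t * (k - n * p)))).comp_aemeasurable
      hX.aemeasurable
  mgf_le t := by
    have hbase : 0 ≤ 1 - (p : ℝ) + p * exp t :=
      add_nonneg (one_minus_nonneg p) (mul_nonneg (nonneg p) (exp_pos t).le)
    calc mgf (fun ω ↦ X ω - n * p) μ t
        = (1 - p + p * exp t) ^ n * exp (t * -(n * p)) := by
          simp only [sub_eq_add_neg, mgf_add_const, mgf_of_hasLaw_binomial hX]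
      _ ≤ exp (p * t + t ^ 2 / 8) ^ n * exp (t * -(n * p)) := by
          gcongr; exact one_sub_add_mul_exp_le_exp p t
      _ = exp (↑(n / 4 : ℝ≥0) * t ^ 2 / 2) := by
          rw [← exp_nat_mul, ← exp_add]; push_cast; ring_nf

lemma measureReal_max_inter_min_of_hasLaw_binomial (hX : HasLaw X (binomial n p) μ)
    (hY : HasLaw Y (binomial n p) μ) (hXY : IndepFun X Y μ) :
    μ.real (X ⁻¹' {n} ∩ Y ⁻¹' {0}) = p ^ n * (1 - p) ^ n := by
  rw [measureReal_def, hXY.measure_inter_preimage_eq_mul _ _ (measurableSet_singleton n)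
    (measurableSet_singleton 0), ENNReal.toReal_mul, ← measureReal_def, ← measureReal_def,
    ← map_measureReal_apply_of_aemeasurable hX.aemeasurable (measurableSet_singleton n),
    ← map_measureReal_apply_of_aemeasurable hY.aemeasurable (measurableSet_singleton 0),
    hX.map_eq, hY.map_eq, binomial_real_self, binomial_real_zero]

lemma measureReal_one_sub_mul_le_mul_le_of_hasLaw_binomial (hX : HasLaw X (binomial n p) μ)
    (hY : HasLaw Y (binomial n p) μ) (hXY : IndepFun X Y μ) (hn : 0 < n) {τ : ℝ}
    (hτ : τ ≤ 1 / 2) :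
    μ.real {ω | (1 - τ) * Y ω ≤ τ * X ω} ≤
      exp (-(2 * (1 - 2 * τ) ^ 2 * p ^ 2 * n) / (τ ^ 2 + (1 - τ) ^ 2)) := by
  -- `const_mul` states its constant on the subtype `{r // 0 ≤ r}` rather than on `ℝ≥0`,
  -- which `simp` cannot see through; the final `rfl` identifies the two.
  have hU : HasSubgaussianMGF (fun ω ↦ τ * (X ω - n * p)) (‖τ‖₊ ^ 2 * (n / 4)) μ := by
    convert (hasSubgaussianMGF_of_hasLaw_binomial hX).const_mul τ using 2
    ext; simp; rfl
  have hV : HasSubgaussianMGF (fun ω ↦ (1 - τ) * (Y ω - n * p)) (‖1 - τ‖₊ ^ 2 * (n / 4)) μ := by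
    convert (hasSubgaussianMGF_of_hasLaw_binomial hY).const_mul (1 - τ) using 2
    ext; simp; rfl
  have hUV := hU.sub_of_indepFun hV <| hXY.comp (φ := fun k : ℕ ↦ τ * (k - n * p))
    (ψ := fun k : ℕ ↦ (1 - τ) * (k - n * p)) .of_discrete .of_discrete
  have hε : 0 ≤ (n : ℝ) * p * (1 - 2 * τ) :=
    mul_nonneg (mul_nonneg n.cast_nonneg (nonneg p)) (by linarith)
  have hset : {ω | (1 - τ) * Y ω ≤ τ * X ω} =
      {ω | (n : ℝ) * p * (1 - 2 * τ) ≤ τ * (X ω - n * p) - (1 - τ) * (Y ω - n * p)} := by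
    ext ω; constructor <;> intro h <;> simp only [Set.mem_ofPred_eq] at h ⊢ <;> linarith
  rw [hset]
  refine (hUV.measure_ge_le hε).trans_eq ?_
  have hD : 0 < τ ^ 2 + (1 - τ) ^ 2 := by nlinarith [sq_nonneg τ, sq_nonneg (1 - τ)]
  have hn' : (n : ℝ) ≠ 0 := by positivity
  congr 1
  push_cast
  simp only [Real.norm_eq_abs, sq_abs]
  field_simp
  ring

end Binomial

theorem stmt_14 {Ω : Type*} [MeasurableSpace Ω] (μ : Measure Ω)
    [IsProbabilityMeasure μ] (n : ℕ) (hn : 0 < n) (r : ℝ) (τ : ℝ) (hτ : τ ∈ Set.Ioo (0:ℝ) (1/2)) (hr : r ∈ Set.Ioo (0:ℝ) (1/2))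
    (Nbb Nsb : Ω → ℕ) (hmbb : Measurable Nbb) (hmsb : Measurable Nsb)
    (hind : IndepFun Nbb Nsb μ)
    (hdbb : ∀ k, μ {ω | Nbb ω = k} =
      ENNReal.ofReal ((n.choose k : ℝ) * (1 - r) ^ k * r ^ (n - k)))
    (hdsb : ∀ k, μ {ω | Nsb ω = k} =
      ENNReal.ofReal ((n.choose k : ℝ) * (1 - r) ^ k * r ^ (n - k))) :
    (1 - r) ^ n * r ^ n ≤
      (μ {ω | (Nsb ω : ℝ) / ((Nsb ω : ℝ) + (Nbb ω : ℝ)) ≤ τ ∧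
        ((n : ℝ) - (Nbb ω : ℝ)) / (2 * (n : ℝ) - (Nbb ω : ℝ) - (Nsb ω : ℝ)) ≤ τ}).toReal ∧
    (μ {ω | (Nsb ω : ℝ) / ((Nsb ω : ℝ) + (Nbb ω : ℝ)) ≤ τ ∧
        ((n : ℝ) - (Nbb ω : ℝ)) / (2 * (n : ℝ) - (Nbb ω : ℝ) - (Nsb ω : ℝ)) ≤ τ}).toReal ≤
      Real.exp (-(2 * (1 - 2 * τ) ^ 2 * (1 - r) ^ 2 * n) / (τ ^ 2 + (1 - τ) ^ 2)) := by
  obtain ⟨hτ0, hτ2⟩ := hτ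
  obtain ⟨hr0, hr2⟩ := hr
  let p : I := ⟨1 - r, by linarith, by linarith⟩
  have hbb : HasLaw Nbb (binomial n p) μ :=
    hasLaw_binomial_of_measure_eq hmbb (by simpa [p] using hdbb)
  have hsb : HasLaw Nsb (binomial n p) μ :=
    hasLaw_binomial_of_measure_eq hmsb (by simpa [p] using hdsb)
  constructor
  · calc (1 - r) ^ n * r ^ n = μ.real (Nbb ⁻¹' {n} ∩ Nsb ⁻¹' {0}) := by
          rw [measureReal_max_inter_min_of_hasLaw_binomial hbb hsb hind]; simp [p]
      _ ≤ _ := measureReal_mono fun ω ⟨hb, hs⟩ ↦ by simp_all [hτ0.le]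
  · refine (measureReal_mono fun ω hω ↦ ?_).trans
      (measureReal_one_sub_mul_le_mul_le_of_hasLaw_binomial hbb hsb hind hn hτ2.le)
    exact one_sub_mul_le_mul_of_div_add_le (Nat.cast_nonneg _) (Nat.cast_nonneg _) hω.1
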